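/- For every $\bar a\in\Sigma$ and every $i\in\{1,\dots,l\}$, the limit $c_{\bar a}(i):=\lim_{n\to\infty}(E^n_{\bar a})_{ij}$ exists and its value is independent of $j\in\{1,\dots,l\}$. -/

import Mathlib

open Filter Topology

noncomputable section

/-- Product of matrices `A (a 0) * A (a 1) * ⋯ * A (a (n-1))`,
representing `A_{a_1} A_{a_2} ⋯ A_{a_n}` for the (1-indexed) sequence `ā`. -/
def matSeq {l k : ℕ} {R : Type} [Semiring R] (A : Fin k → Matrix (Fin l) (Fin l) R) :
    (ℕ → Fin k) → ℕ → Matrix (Fin l) (Fin l) R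
  | _, 0 => 1
  | a, n + 1 => A (a 0) * matSeq A (fun i => a (i + 1)) n

/-- Product `ω (a 0) * ⋯ * ω (a (n-1))`, representing `ω_{a_1} ⋯ ω_{a_n}`. -/
def prodSeq {k : ℕ} (ω : Fin k → ℝ) : (ℕ → Fin k) → ℕ → ℝ
  | _, 0 => 1
  | a, n + 1 => ω (a 0) * prodSeq ω (fun i => a (i + 1)) n

open Classical in
/-- The metric on `Σ = {1,…,k}^ℕ`: `d(ā,b̄) = 1/L` where `L` is the least (1-indexed)
position where the sequences differ, and `0` if they are equal. -/
def dSigma {k : ℕ} (a b : ℕ → Fin k) : ℝ :=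
  if h : ∃ n, a n ≠ b n then 1 / ((Nat.find h : ℝ) + 1) else 0

/-- The matrix `E^n_ā` with entries `(A^n_ā)_{ij} / (ω^n_ā V_j)`. -/
def Emat {l k : ℕ} (A : Fin k → Matrix (Fin l) (Fin l) ℝ) (ω : Fin k → ℝ) (V : Fin l → ℝ)
    (a : ℕ → Fin k) (n : ℕ) : Matrix (Fin l) (Fin l) ℝ :=
  fun i j => matSeq A a n i j / (prodSeq ω a n * V j)

/-- The set of columns of `E^n_ā`, as vectors of `ℝ^l`. -/
def Ecols {l k : ℕ} (A : Fin k → Matrix (Fin l) (Fin l) ℝ) (ω : Fin k → ℝ) (V : Fin l → ℝ)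
    (a : ℕ → Fin k) (n : ℕ) : Set (EuclideanSpace ℝ (Fin l)) :=
  {v | ∃ j : Fin l, ∀ i : Fin l, v i = Emat A ω V a n i j}

/-- `Δ^n_ā`, the convex hull in `ℝ^l` of the columns of `E^n_ā`. -/
def DeltaSet {l k : ℕ} (A : Fin k → Matrix (Fin l) (Fin l) ℝ) (ω : Fin k → ℝ) (V : Fin l → ℝ)
    (a : ℕ → Fin k) (n : ℕ) : Set (EuclideanSpace ℝ (Fin l)) :=
  convexHull ℝ (Ecols A ω V a n)

/-!
Fix the row `i` and put `x n = (E^n_ā)_{i,·}`. With `B_s = A_s / ω_s`, the vector `V` is a common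
left fixed vector of the `B_s`, so `E^{n+r}_ā = E^n_ā T` where `T = diag V · B^r_{σⁿā} · (diag V)⁻¹`
is column-stochastic. Hence `max x n` decreases and `min x n` increases. For `r = N` the entries of
`T` are positive and depend only on the `N` letters `a_n, …, a_{n+N-1}`, so they are bounded below
by a uniform `ε > 0`; this gives `max x (n+N) ≤ max x n - ε (max x n - min x n)`, and in the limit
the two monotone limits coincide.
-/

open Matrix

lemma Set.Finite.exists_pos_forall_le {S : Set ℝ} (hS : S.Finite) (hpos : ∀ x ∈ S, 0 < x) :
    ∃ ε > 0, ∀ x ∈ S, ε ≤ x := by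
  rcases S.eq_empty_or_nonempty with rfl | hne
  · exact ⟨1, one_pos, by simp⟩
  · obtain ⟨x₀, hx₀, hmin⟩ := Set.exists_min_image S id hS hne
    exact ⟨x₀, hpos x₀ hx₀, hmin⟩

lemma DependsOn.exists_pos_forall_le {ι α γ : Type*} [Finite α] [Finite γ] {s : Set ι}
    (hs : s.Finite) {F : (ι → α) → γ → ℝ} (hF : DependsOn F s) (hpos : ∀ b g, 0 < F b g) :
    ∃ ε > 0, ∀ b g, ε ≤ F b g := by
  have hfin : (Set.range fun z : (ι → α) × γ => F z.1 z.2).Finite := by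
    obtain ⟨G, rfl⟩ := dependsOn_iff_exists_comp.1 hF
    have := hs.to_subtype
    refine (Set.finite_range fun z : (s → α) × γ => G z.1 z.2).subset ?_
    rintro _ ⟨⟨b, g⟩, rfl⟩
    exact ⟨(s.domRestrict b, g), rfl⟩
  obtain ⟨ε, hε, hle⟩ := hfin.exists_pos_forall_le (by rintro _ ⟨z, rfl⟩; exact hpos z.1 z.2)
  exact ⟨ε, hε, fun b g => hle _ ⟨(b, g), rfl⟩⟩

namespace Matrix

variable {ι : Type*} [Fintype ι] [DecidableEq ι] {T : Matrix ι ι ℝ} {x : ι → ℝ} {c ε : ℝ}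

lemma vecMul_apply_le_sub_of_mem_colStochastic (hT : T ∈ colStochastic ℝ ι)
    (hε : ∀ p q, ε ≤ T p q) (hx : ∀ p, x p ≤ c) (p₀ q : ι) :
    (x ᵥ* T) q ≤ c - ε * (c - x p₀) := by
  have hsum : (x ᵥ* T) q = c - ∑ p, (c - x p) * T p q := by
    simp only [vecMul, dotProduct, sub_mul, Finset.sum_sub_distrib, ← Finset.mul_sum,
      sum_col_of_mem_colStochastic hT, mul_one, sub_sub_cancel]
  have hp₀ : (c - x p₀) * T p₀ q ≤ ∑ p, (c - x p) * T p q :=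
    Finset.single_le_sum (fun p _ => mul_nonneg (sub_nonneg.2 (hx p)) (hT.1 p q))
      (Finset.mem_univ p₀)
  nlinarith [mul_le_mul_of_nonneg_left (hε p₀ q) (sub_nonneg.2 (hx p₀))]

lemma vecMul_apply_le_of_mem_colStochastic (hT : T ∈ colStochastic ℝ ι) (hx : ∀ p, x p ≤ c)
    (q : ι) : (x ᵥ* T) q ≤ c := by
  simpa using vecMul_apply_le_sub_of_mem_colStochastic hT hT.1 hx q q

lemma le_vecMul_apply_of_mem_colStochastic (hT : T ∈ colStochastic ℝ ι) (hx : ∀ p, c ≤ x p)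
    (q : ι) : c ≤ (x ᵥ* T) q := by
  have := vecMul_apply_le_of_mem_colStochastic hT (x := -x) (c := -c) (by simpa using hx) q
  simpa [neg_vecMul] using this

theorem exists_tendsto_of_vecMul_colStochastic [Nonempty ι] {x : ℕ → ι → ℝ}
    {T : ℕ → ℕ → Matrix ι ι ℝ} (hT : ∀ n r, T n r ∈ colStochastic ℝ ι)
    (hx : ∀ n r, x (n + r) = x n ᵥ* T n r) {N : ℕ} (hε : 0 < ε)
    (hTε : ∀ n p q, ε ≤ T n N p q) :
    ∃ c, ∀ j, Tendsto (fun n => x n j) atTop (𝓝 c) := by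
  set M : ℕ → ℝ := fun n => ⨆ j, x n j
  set m : ℕ → ℝ := fun n => ⨅ j, x n j
  have le_M (n j) : x n j ≤ M n := le_ciSup (Finite.bddAbove_range _) j
  have m_le (n j) : m n ≤ x n j := ciInf_le (Finite.bddBelow_range _) j
  have M_add_le (n r) : M (n + r) ≤ M n := ciSup_le fun j => by
    rw [hx]; exact vecMul_apply_le_of_mem_colStochastic (hT n r) (le_M n) j
  have le_m_add (n r) : m n ≤ m (n + r) := le_ciInf fun j => by
    rw [hx]; exact le_vecMul_apply_of_mem_colStochastic (hT n r) (m_le n) j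
  have M_add_N_le (n) : M (n + N) ≤ M n - ε * (M n - m n) := by
    obtain ⟨p₀, hp₀⟩ := exists_eq_ciInf_of_finite (f := x n)
    refine ciSup_le fun j => ?_
    rw [hx, show m n = x n p₀ from hp₀.symm]
    exact vecMul_apply_le_sub_of_mem_colStochastic (hT n N) (hTε n) (le_M n) p₀ j
  obtain ⟨j₀⟩ := ‹Nonempty ι›
  have m_le_M (n) : m n ≤ M n := (m_le n j₀).trans (le_M n j₀)
  have M_anti : Antitone M := antitone_nat_of_succ_le fun n => M_add_le n 1
  have m_mono : Monotone m := monotone_nat_of_le_succ fun n => le_m_add n 1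
  have hM : Tendsto M atTop (𝓝 (⨅ n, M n)) := tendsto_atTop_ciInf M_anti
    ⟨m 0, by rintro _ ⟨n, rfl⟩; exact (m_mono n.zero_le).trans (m_le_M n)⟩
  have hm : Tendsto m atTop (𝓝 (⨆ n, m n)) := tendsto_atTop_ciSup m_mono
    ⟨M 0, by rintro _ ⟨n, rfl⟩; exact (m_le_M n).trans (M_anti n.zero_le)⟩
  have hlim_le : ⨆ n, m n ≤ ⨅ n, M n := le_of_tendsto_of_tendsto' hm hM m_le_M
  have hlim_ge : ⨅ n, M n ≤ ⨆ n, m n := by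
    have := le_of_tendsto_of_tendsto' ((tendsto_add_atTop_iff_nat N).2 hM)
      (hM.sub ((hM.sub hm).const_mul ε)) M_add_N_le
    nlinarith
  refine ⟨⨆ n, m n, fun j => tendsto_of_tendsto_of_tendsto_of_le_of_le hm ?_ (m_le · j) (le_M · j)⟩
  rwa [le_antisymm hlim_le hlim_ge]

lemma diagonal_mul_mul_diagonal_inv_mem_colStochastic {M : Matrix ι ι ℝ} {V : ι → ℝ}
    (hV : ∀ p, 0 < V p) (hM : ∀ p q, 0 ≤ M p q) (hVM : V ᵥ* M = V) :
    diagonal V * M * diagonal V⁻¹ ∈ colStochastic ℝ ι := by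
  refine ⟨fun p q => ?_, ?_⟩
  · rw [mul_diagonal, diagonal_mul]
    exact mul_nonneg (mul_nonneg (hV p).le (hM p q)) (inv_nonneg.2 (hV q).le)
  · have hV1 : (1 : ι → ℝ) ᵥ* diagonal V = V := by ext; simp [vecMul_diagonal]
    have hV2 : V ᵥ* diagonal V⁻¹ = 1 := by ext q; simp [vecMul_diagonal, (hV q).ne']
    rw [← vecMul_vecMul, ← vecMul_vecMul, hV1, hVM, hV2]

end Matrix

section matSeq

variable {l k : ℕ} {R : Type} [Semiring R]

lemma matSeq_dependsOn (A : Fin k → Matrix (Fin l) (Fin l) R) (n : ℕ) :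
    DependsOn (fun b => matSeq A b n) (Set.Iio n) := by
  induction n with
  | zero => intro _ _ _; rfl
  | succ n ih =>
    intro b b' h
    show A (b 0) * matSeq A _ n = A (b' 0) * matSeq A _ n
    rw [h 0 n.succ_pos]
    exact congrArg _ (@ih (fun t => b (t + 1)) (fun t => b' (t + 1))
      fun t ht => h (t + 1) (Nat.succ_lt_succ ht))

lemma matSeq_add (A : Fin k → Matrix (Fin l) (Fin l) R) (a : ℕ → Fin k) (m n : ℕ) :
    matSeq A a (m + n) = matSeq A a m * matSeq A (fun t => a (t + m)) n := by
  induction m generalizing a with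
  | zero => simp [matSeq]
  | succ m ih =>
    rw [Nat.add_right_comm]
    show A (a 0) * matSeq A _ (m + n) = A (a 0) * matSeq A _ m * _
    simp only [ih, Matrix.mul_assoc, Nat.add_assoc]

lemma vecMul_matSeq {A : Fin k → Matrix (Fin l) (Fin l) R} {v : Fin l → R}
    (hA : ∀ i, v ᵥ* A i = v) (a : ℕ → Fin k) (n : ℕ) : v ᵥ* matSeq A a n = v := by
  induction n generalizing a with
  | zero => exact vecMul_one v
  | succ n ih =>
    show v ᵥ* (A (a 0) * matSeq A _ n) = v
    rw [← vecMul_vecMul, hA, ih]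

lemma matSeq_nonneg [PartialOrder R] [IsOrderedRing R] {A : Fin k → Matrix (Fin l) (Fin l) R}
    (hA : ∀ i p q, 0 ≤ A i p q) (a : ℕ → Fin k) (n : ℕ) (p q : Fin l) : 0 ≤ matSeq A a n p q := by
  induction n generalizing a p q with
  | zero => by_cases h : p = q <;> simp [matSeq, one_apply, h]
  | succ n ih =>
    show 0 ≤ (A (a 0) * matSeq A _ n) p q
    rw [mul_apply]
    exact Finset.sum_nonneg fun t _ => mul_nonneg (hA _ _ _) (ih _ _ _)

lemma matSeq_inv_smul (A : Fin k → Matrix (Fin l) (Fin l) ℝ) (ω : Fin k → ℝ) (a : ℕ → Fin k)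
    (n : ℕ) : matSeq (fun i => (ω i)⁻¹ • A i) a n = (prodSeq ω a n)⁻¹ • matSeq A a n := by
  induction n generalizing a with
  | zero => simp [matSeq, prodSeq]
  | succ n ih =>
    show (ω (a 0))⁻¹ • A (a 0) * matSeq _ _ n = (ω (a 0) * prodSeq ω _ n)⁻¹ • (A (a 0) * _)
    rw [ih, smul_mul_smul_comm, mul_inv]

lemma Emat_eq_matSeq_mul_diagonal (A : Fin k → Matrix (Fin l) (Fin l) ℝ) (ω : Fin k → ℝ)
    (V : Fin l → ℝ) (a : ℕ → Fin k) (n : ℕ) :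
    Emat A ω V a n = matSeq (fun i => (ω i)⁻¹ • A i) a n * diagonal V⁻¹ := by
  ext p q
  rw [matSeq_inv_smul, mul_diagonal, Matrix.smul_apply, smul_eq_mul, Emat, Pi.inv_apply,
    div_eq_mul_inv, mul_inv]
  ring

lemma Emat_add {A : Fin k → Matrix (Fin l) (Fin l) ℝ} {ω : Fin k → ℝ} {V : Fin l → ℝ}
    (hV : ∀ p, V p ≠ 0) (a : ℕ → Fin k) (n r : ℕ) :
    Emat A ω V a (n + r) = Emat A ω V a n *
      (diagonal V * matSeq (fun i => (ω i)⁻¹ • A i) (fun t => a (t + n)) r * diagonal V⁻¹) := by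
  have hVV : diagonal V⁻¹ * diagonal V = 1 := by
    rw [diagonal_mul_diagonal, ← diagonal_one]
    exact congrArg diagonal (funext fun p => inv_mul_cancel₀ (hV p))
  simp only [Emat_eq_matSeq_mul_diagonal, matSeq_add, Matrix.mul_assoc]
  rw [← Matrix.mul_assoc (diagonal V⁻¹), hVV, Matrix.one_mul]

end matSeq

theorem freq_limit_exists_general {l k : ℕ}
    (A : Fin k → Matrix (Fin l) (Fin l) ℝ) (ω : Fin k → ℝ) (V : Fin l → ℝ)
    (hA : ∀ i : Fin k, ∀ p q : Fin l, 0 ≤ A i p q)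
    (hω : ∀ i, 0 < ω i) (hV : ∀ p, 0 < V p)
    (heig : ∀ i : Fin k, ∀ j : Fin l, ∑ p, V p * A i p j = ω i * V j)
    (N : ℕ)
    (hpos : ∀ (b : ℕ → Fin k) (p q : Fin l),
      0 < matSeq (fun i => (ω i)⁻¹ • A i) b N p q) :
    ∀ (a : ℕ → Fin k) (i : Fin l), ∃ c : ℝ, ∀ j : Fin l,
      Tendsto (fun n => Emat A ω V a n i j) atTop (nhds c) := by
  intro a i
  set B : Fin k → Matrix (Fin l) (Fin l) ℝ := fun s => (ω s)⁻¹ • A s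
  have hB (s p q) : 0 ≤ B s p q := mul_nonneg (inv_nonneg.2 (hω s).le) (hA s p q)
  have hVB (s) : V ᵥ* B s = V := by
    rw [vecMul_smul, show V ᵥ* A s = ω s • V from funext (heig s), smul_smul,
      inv_mul_cancel₀ (hω s).ne', one_smul]
  let T (b : ℕ → Fin k) (r : ℕ) := diagonal V * matSeq B b r * diagonal V⁻¹
  obtain ⟨ε, hε, hεT⟩ : ∃ ε > 0, ∀ b (pq : Fin l × Fin l), ε ≤ T b N pq.1 pq.2 := by
    refine DependsOn.exists_pos_forall_le (Set.finite_Iio N) (fun b b' h => ?_) fun b pq => ?_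
    · simp only [T, matSeq_dependsOn B N h]
    · simp only [T, diagonal_mul, mul_diagonal, Pi.inv_apply]
      have := hpos b pq.1 pq.2
      have := hV pq.1
      have := hV pq.2
      positivity
  have : Nonempty (Fin l) := ⟨i⟩
  exact exists_tendsto_of_vecMul_colStochastic (x := fun n => Emat A ω V a n i)
    (T := fun n => T fun t => a (t + n))
    (fun n r => diagonal_mul_mul_diagonal_inv_mem_colStochastic hV (matSeq_nonneg hB _ r)
      (vecMul_matSeq hVB _ r))
    (fun n r => by rw [Emat_add (fun p => (hV p).ne')]; rfl) hε fun n p q => hεT _ (p, q)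

/-- The limit `c_ā(i) = lim_n (E^n_ā)_{ij}` exists and is independent of `j`. -/
theorem freq_limit_exists {l k : ℕ} (hl : 0 < l) (hk : 0 < k)
    (A : Fin k → Matrix (Fin l) (Fin l) ℝ) (ω : Fin k → ℝ) (V : Fin l → ℝ)
    (hA : ∀ i : Fin k, ∀ p q : Fin l, 0 ≤ A i p q)
    (hω : ∀ i, 0 < ω i) (hV : ∀ p, 0 < V p)
    (heig : ∀ i : Fin k, ∀ j : Fin l, ∑ p, V p * A i p j = ω i * V j)
    (N : ℕ) (hN : 0 < N)
    (hpos : ∀ (b : ℕ → Fin k) (p q : Fin l),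
      0 < matSeq (fun i => (ω i)⁻¹ • A i) b N p q) :
    ∀ (a : ℕ → Fin k) (i : Fin l), ∃ c : ℝ, ∀ j : Fin l,
      Tendsto (fun n => Emat A ω V a n i j) atTop (nhds c) :=
  freq_limit_exists_general A ω V hA hω hV heig N hpos
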